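/- arXiv:1510.06274 — 3 statements merged into one kernel-verified Lean document; each statement's English description precedes it below -/
import Mathlib

section
/- Let p be a prime and A ∈ GL_N(𝔽_p) with det A = 1, N ≥ 2, and suppose the order of A in GL_N(𝔽_p) equals q = (p^N − 1)/(p − 1). Then every nonzero vector v ∈ 𝔽_p^N has orbit {Aᵏv : k ≥ 0} of size exactly q, and there are exactly p − 1 distinct such orbits partitioning 𝔽_p^N \ {0}. -/
/-!
Because `M.charpoly` is irreducible, `aeval M g` is either zero or invertible for every
polynomial `g`; applied to `g = X ^ i - X ^ j` this shows that `M ^ i v = M ^ j v` with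
`v ≠ 0` forces `M ^ i = M ^ j`. So the orbit of every nonzero vector has exactly
`orderOf M = q` elements. The orbits partition the `p ^ N - 1` nonzero vectors, hence there
are `(p ^ N - 1) / q = p - 1` of them.
-/

open Polynomial Matrix

namespace Set

variable {α : Type*} {O : α → Set α} {P : Set α}

theorem pairwiseDisjoint_image_of_forall_mem_eq (hO : ∀ v w, w ∈ O v → O w = O v) :
    (O '' P).PairwiseDisjoint id := by
  rintro _ ⟨v, -, rfl⟩ _ ⟨w, -, rfl⟩ hne
  exact disjoint_left.mpr fun x hxv hxw => hne (by rw [← hO v x hxv, hO w x hxw])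

theorem sUnion_image_eq_of_forall_mem_self (hself : ∀ v, v ∈ O v) (hP : ∀ v ∈ P, O v ⊆ P) :
    ⋃₀ (O '' P) = P := by
  refine subset_antisymm (sUnion_subset ?_) fun v hv => ⟨O v, ⟨v, hv, rfl⟩, hself v⟩
  rintro _ ⟨v, hv, rfl⟩
  exact hP v hv

theorem ncard_image_mul_eq_ncard (hPfin : P.Finite) (hself : ∀ v, v ∈ O v)
    (hO : ∀ v w, w ∈ O v → O w = O v) (hP : ∀ v ∈ P, O v ⊆ P) {q : ℕ}
    (hq : ∀ v ∈ P, (O v).ncard = q) : (O '' P).ncard * q = P.ncard := by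
  classical
  have hfin : (O '' P).Finite := hPfin.image O
  have hmem_fin : ∀ S ∈ O '' P, S.Finite := by
    rintro _ ⟨v, hv, rfl⟩
    exact hPfin.subset (hP v hv)
  calc (O '' P).ncard * q = ∑ᶠ S ∈ O '' P, S.ncard := by
        rw [finsum_mem_eq_finite_toFinset_sum _ hfin, ncard_eq_toFinset_card _ hfin,
          ← smul_eq_mul, ← Finset.sum_const]
        refine Finset.sum_congr rfl fun S hS => ?_
        obtain ⟨v, hv, rfl⟩ := (Finite.mem_toFinset hfin).mp hS
        exact (hq v hv).symm
    _ = (⋃ S ∈ O '' P, S).ncard :=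
        (hfin.ncard_biUnion (s := fun S => S) hmem_fin
          (pairwiseDisjoint_image_of_forall_mem_eq hO)).symm
    _ = P.ncard := by rw [← sUnion_eq_biUnion, sUnion_image_eq_of_forall_mem_self hself hP]

end Set

namespace Matrix

section PowOrbit

variable {R n : Type*} [Semiring R] [Fintype n] [DecidableEq n]

def powOrbit (M : Matrix n n R) (v : n → R) : Set (n → R) := {w | ∃ k : ℕ, w = M ^ k *ᵥ v}

variable {M : Matrix n n R}

theorem mem_powOrbit_self (v : n → R) : v ∈ powOrbit M v := ⟨0, by rw [pow_zero, one_mulVec]⟩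

theorem powOrbit_eq_of_mem (hM : IsOfFinOrder M) {v w : n → R} (hw : w ∈ powOrbit M v) :
    powOrbit M w = powOrbit M v := by
  obtain ⟨k, rfl⟩ := hw
  ext x
  constructor
  · rintro ⟨j, rfl⟩
    exact ⟨j + k, by rw [mulVec_mulVec, pow_add]⟩
  · rintro ⟨j, rfl⟩
    obtain ⟨o, ho⟩ := Nat.exists_eq_add_one_of_ne_zero (orderOf_pos_iff.mpr hM).ne'
    refine ⟨j + o * k, ?_⟩
    rw [mulVec_mulVec, ← pow_add, add_assoc, ← add_one_mul, pow_add, pow_mul, ← ho,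
      pow_orderOf_eq_one, one_pow, mul_one]

theorem powOrbit_subset_ne_zero (hM : IsOfFinOrder M) {v : n → R} (hv : v ≠ 0) :
    powOrbit M v ⊆ {w | w ≠ 0} := by
  rintro w hw rfl
  obtain ⟨k, rfl⟩ := powOrbit_eq_of_mem hM hw ▸ mem_powOrbit_self v
  exact hv (mulVec_zero _)

theorem powOrbit_eq_image_Iio (hM : IsOfFinOrder M) (v : n → R) :
    powOrbit M v = (fun k => M ^ k *ᵥ v) '' Set.Iio (orderOf M) := by
  ext w
  constructor
  · rintro ⟨k, rfl⟩
    exact ⟨k % orderOf M, Nat.mod_lt k (orderOf_pos_iff.mpr hM), by simp only [pow_mod_orderOf]⟩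
  · rintro ⟨k, -, rfl⟩
    exact ⟨k, rfl⟩

end PowOrbit

section Irreducible

variable {K n : Type*} [Field K] [Fintype n] [DecidableEq n] {M : Matrix n n K}

theorem aeval_eq_zero_of_mulVec_eq_zero (hM : Irreducible M.charpoly) {g : K[X]} {v : n → K}
    (hv : v ≠ 0) (h : aeval M g *ᵥ v = 0) : aeval M g = 0 := by
  by_cases hdvd : M.charpoly ∣ g
  · obtain ⟨c, rfl⟩ := hdvd
    rw [map_mul, aeval_self_charpoly, zero_mul]
  -- a Bézout relation `a * charpoly + b * g = 1` makes `aeval M b` an inverse of `aeval M g`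
  obtain ⟨a, b, hab⟩ := hM.coprime_iff_not_dvd.mpr hdvd
  have hinv : aeval M b * aeval M g = 1 := by
    simpa [aeval_self_charpoly] using congrArg (aeval M) hab
  refine absurd ?_ hv
  rw [← one_mulVec v, ← hinv, ← mulVec_mulVec, h, mulVec_zero]

theorem pow_eq_pow_of_pow_mulVec_eq (hM : Irreducible M.charpoly) {v : n → K} (hv : v ≠ 0)
    {i j : ℕ} (h : M ^ i *ᵥ v = M ^ j *ᵥ v) : M ^ i = M ^ j := by
  have := aeval_eq_zero_of_mulVec_eq_zero hM (g := X ^ i - X ^ j) hv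
    (by rw [map_sub, map_pow, map_pow, aeval_X, sub_mulVec, h, sub_self])
  rwa [map_sub, map_pow, map_pow, aeval_X, sub_eq_zero] at this

theorem ncard_powOrbit (hM : Irreducible M.charpoly) (hfin : IsOfFinOrder M) {v : n → K}
    (hv : v ≠ 0) :
    (powOrbit M v).ncard = orderOf M := by
  rw [powOrbit_eq_image_Iio hfin, Set.InjOn.ncard_image, Set.ncard_Iio_nat]
  exact fun i hi j hj h => pow_injOn_Iio_orderOf hi hj (pow_eq_pow_of_pow_mulVec_eq hM hv h)

end Irreducible

end Matrix

theorem stmt9_general (p N : ℕ) [Fact p.Prime] (hN : 2 ≤ N)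
    (M : Matrix (Fin N) (Fin N) (ZMod p))
    (hirr : Irreducible M.charpoly)
    (hord : orderOf M = (p ^ N - 1) / (p - 1)) :
    (∀ v : Fin N → ZMod p, v ≠ 0 →
        Nat.card {w : Fin N → ZMod p | ∃ k : ℕ, w = (M ^ k).mulVec v} = (p ^ N - 1) / (p - 1)) ∧
    Nat.card {S : Set (Fin N → ZMod p) |
        ∃ v : Fin N → ZMod p, v ≠ 0 ∧ S = {w | ∃ k : ℕ, w = (M ^ k).mulVec v}} = p - 1 ∧
    {S : Set (Fin N → ZMod p) |
        ∃ v : Fin N → ZMod p, v ≠ 0 ∧ S = {w | ∃ k : ℕ, w = (M ^ k).mulVec v}}.PairwiseDisjoint id ∧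
    ⋃₀ {S : Set (Fin N → ZMod p) |
        ∃ v : Fin N → ZMod p, v ≠ 0 ∧ S = {w | ∃ k : ℕ, w = (M ^ k).mulVec v}}
      = {v : Fin N → ZMod p | v ≠ 0} := by
  have hp := (Fact.out : p.Prime).two_le
  have hq : 0 < (p ^ N - 1) / (p - 1) :=
    Nat.div_pos (Nat.sub_le_sub_right (Nat.le_self_pow (by omega) p) 1) (by omega)
  have hfin : IsOfFinOrder M := orderOf_pos_iff.mp (hord ▸ hq)
  have hcard : ∀ v ∈ {v : Fin N → ZMod p | v ≠ 0},
      (powOrbit M v).ncard = (p ^ N - 1) / (p - 1) := fun v hv => hord ▸ ncard_powOrbit hirr hfin hv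
  have horbits : {S : Set (Fin N → ZMod p) | ∃ v, v ≠ 0 ∧ S = {w | ∃ k : ℕ, w = M ^ k *ᵥ v}} =
      powOrbit M '' {v | v ≠ 0} := by
    ext S
    simp only [powOrbit, Set.mem_image, Set.mem_ofPred_eq, eq_comm (a := S)]
  have hnonzero : {v : Fin N → ZMod p | v ≠ 0}.ncard = p ^ N - 1 := by
    rw [← Set.compl_singleton_eq, Set.ncard_compl, Set.ncard_singleton, Nat.card_fun]
    simp
  rw [horbits]
  refine ⟨fun v hv => (Nat.card_coe_set_eq _).trans (hcard v hv), ?_,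
    Set.pairwiseDisjoint_image_of_forall_mem_eq fun _ _ => powOrbit_eq_of_mem hfin,
    Set.sUnion_image_eq_of_forall_mem_self mem_powOrbit_self fun _ => powOrbit_subset_ne_zero hfin⟩
  have hcount := Set.ncard_image_mul_eq_ncard (P := {v | v ≠ 0}) (Set.toFinite _)
    mem_powOrbit_self (fun _ _ => powOrbit_eq_of_mem hfin) (fun _ => powOrbit_subset_ne_zero hfin)
    hcard
  rw [hnonzero] at hcount
  rw [Nat.card_coe_set_eq]
  exact Nat.eq_of_mul_eq_mul_right hq
    (hcount.trans (Nat.mul_div_cancel' (Nat.sub_one_dvd_pow_sub_one p N)).symm)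

theorem stmt9 (p N : ℕ) [Fact p.Prime] (hN : 2 ≤ N)
    (M : Matrix (Fin N) (Fin N) (ZMod p)) (hdet : M.det = 1)
    (hirr : Irreducible M.charpoly)
    (hord : orderOf M = (p ^ N - 1) / (p - 1)) :
    (∀ v : Fin N → ZMod p, v ≠ 0 →
        Nat.card {w : Fin N → ZMod p | ∃ k : ℕ, w = (M ^ k).mulVec v} = (p ^ N - 1) / (p - 1)) ∧
    Nat.card {S : Set (Fin N → ZMod p) |
        ∃ v : Fin N → ZMod p, v ≠ 0 ∧ S = {w | ∃ k : ℕ, w = (M ^ k).mulVec v}} = p - 1 ∧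
    {S : Set (Fin N → ZMod p) |
        ∃ v : Fin N → ZMod p, v ≠ 0 ∧ S = {w | ∃ k : ℕ, w = (M ^ k).mulVec v}}.PairwiseDisjoint id ∧
    ⋃₀ {S : Set (Fin N → ZMod p) |
        ∃ v : Fin N → ZMod p, v ≠ 0 ∧ S = {w | ∃ k : ℕ, w = (M ^ k).mulVec v}}
      = {v : Fin N → ZMod p | v ≠ 0} :=
  stmt9_general p N hN M hirr hord
end

section
/- For N ≥ 2, the N×N matrix A(N,s) has determinant 1 for every integer s. -/
/-!
Subtracting from every row but the first the row above it does not change the determinant.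
The first column of `A(N,s)` is constant, and in every other column `j` the entries increase by
one from row `i - 1` to row `i` if `j ≤ i` and stay put otherwise, except around the perturbed
entry, where the increments are `1 + s` and `1 - s`, both strictly below the diagonal. So the
difference matrix has first column `e₀`, and deleting its first row and column leaves a lower
unitriangular matrix.
-/

/-- The two-parameter MIXMAX matrix `A(N,s)` (indices `i j : Fin N` are 0-based,
corresponding to the 1-based indices `i+1, j+1` of the paper). -/
def mixmaxMatrix (N : ℕ) (s : ℤ) : Matrix (Fin N) (Fin N) ℤ :=
  Matrix.of fun i j =>
    if i.val = 0 then 1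
    else if j.val = 0 then 1
    else if i.val < j.val then 1
    else if i = j then 2
    else if i.val = 2 ∧ j.val = 1 then 3 + s
    else (i.val : ℤ) - (j.val : ℤ) + 2

namespace Matrix

variable {R : Type*} [CommRing R]

theorem det_eq_mul_det_submatrix_succ_of_col_zero {n : ℕ}
    (M : Matrix (Fin (n + 1)) (Fin (n + 1)) R) (h : ∀ i : Fin n, M i.succ 0 = 0) :
    M.det = M 0 0 * (M.submatrix Fin.succ Fin.succ).det := by
  rw [det_succ_column_zero, Fin.sum_univ_succ]
  simp [h]

theorem det_eq_one_of_isLowerTriangular {m : Type*} [Fintype m] [LinearOrder m]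
    {M : Matrix m m R} (h : M.IsLowerTriangular) (hdiag : ∀ i, M i i = 1) : M.det = 1 := by
  rw [det_of_isLowerTriangular M h]
  exact Finset.prod_eq_one fun i _ => hdiag i

end Matrix

open Matrix

def mixmaxRowDiff (N : ℕ) (s : ℤ) : Matrix (Fin N) (Fin N) ℤ :=
  Matrix.of fun i j =>
    if i.val = 0 then 1
    else if i.val < j.val then 0
    else if i = j then 1
    else if j.val = 0 then 0
    else if i.val = 2 ∧ j.val = 1 then 1 + s
    else if i.val = 3 ∧ j.val = 1 then 1 - s
    else 1

variable (n : ℕ) (s : ℤ)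

theorem mixmaxMatrix_succ_row (i : Fin n) (j : Fin (n + 1)) :
    mixmaxMatrix (n + 1) s i.succ j =
      mixmaxRowDiff (n + 1) s i.succ j + mixmaxMatrix (n + 1) s i.castSucc j := by
  simp only [mixmaxMatrix, mixmaxRowDiff, of_apply, Fin.ext_iff, Fin.val_succ, Fin.val_castSucc,
    Nat.add_one_ne_zero, if_false]
  split_ifs <;> push_cast <;> omega

theorem det_mixmaxMatrix_eq_det_mixmaxRowDiff :
    (mixmaxMatrix (n + 1) s).det = (mixmaxRowDiff (n + 1) s).det :=
  det_eq_of_forall_row_eq_smul_add_pred (fun _ => 1) (fun _ => rfl)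
    fun i j => by rw [one_mul, mixmaxMatrix_succ_row]

theorem isLowerTriangular_mixmaxRowDiff_submatrix_succ :
    ((mixmaxRowDiff (n + 1) s).submatrix Fin.succ Fin.succ).IsLowerTriangular := by
  intro i j (hij : i.val < j.val)
  simp only [mixmaxRowDiff, submatrix_apply, of_apply, Fin.val_succ, Nat.add_one_ne_zero, if_false]
  exact if_pos (Nat.succ_lt_succ hij)

theorem det_mixmaxRowDiff : (mixmaxRowDiff (n + 1) s).det = 1 := by
  rw [det_eq_mul_det_submatrix_succ_of_col_zero _ fun i => by simp [mixmaxRowDiff],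
    det_eq_one_of_isLowerTriangular (isLowerTriangular_mixmaxRowDiff_submatrix_succ n s)
      fun i => by simp [mixmaxRowDiff], mul_one]
  rfl

theorem stmt15_general (N : ℕ) (s : ℤ) : (mixmaxMatrix N s).det = 1 := by
  cases N with
  | zero => exact det_isEmpty
  | succ n => rw [det_mixmaxMatrix_eq_det_mixmaxRowDiff, det_mixmaxRowDiff]

theorem stmt15 (N : ℕ) (hN : 2 ≤ N) (s : ℤ) : (mixmaxMatrix N s).det = 1 :=
  stmt15_general N s
end

section
/- For N ≥ 2 and any integers s, m, the N×N matrix A(N,s,m) has determinant 1. -/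
/-!
Subtracting the first column from every other column does not change the determinant. It turns
`A(N,s,m)` into a lower triangular matrix: above the diagonal the entries are `1 - 1 = 0`, and
on the diagonal they are `1` in the first column and `2 - 1 = 1` elsewhere.
-/

/-- The three-parameter MIXMAX matrix `A(N,s,m)` (indices `i j : Fin N` are 0-based,
corresponding to the 1-based indices `i+1, j+1` of the paper). -/
def mixmaxMatrix3 (N : ℕ) (s m : ℤ) : Matrix (Fin N) (Fin N) ℤ :=
  Matrix.of fun i j =>
    if i.val = 0 then 1
    else if j.val = 0 then 1
    else if i.val < j.val then 1
    else if i = j then 2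
    else if i.val = 2 ∧ j.val = 1 then m + 2 + s
    else ((i.val : ℤ) - (j.val : ℤ)) * m + 2

namespace Matrix

variable {n R : Type*} [Fintype n] [DecidableEq n] [CommRing R]

def subColFromOthers (A : Matrix n n R) (k : n) : Matrix n n R :=
  of fun i j => if j = k then A i j else A i j - A i k

theorem det_subColFromOthers (A : Matrix n n R) (k : n) :
    (A.subColFromOthers k).det = A.det := by
  rw [← det_transpose, ← det_transpose A]
  refine det_eq_of_forall_row_eq_smul_add_const (fun j => if j = k then 0 else -1) k
    (if_pos rfl) fun j i => ?_
  by_cases hj : j = k <;> simp [subColFromOthers, hj, sub_eq_add_neg]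

end Matrix

theorem mixmaxMatrix3_subColFromOthers_isLowerTriangular (n : ℕ) (s m : ℤ) :
    ((mixmaxMatrix3 (n + 1) s m).subColFromOthers 0).IsLowerTriangular := by
  intro i j hij
  have hij : i.val < j.val := hij
  simp only [Matrix.subColFromOthers, mixmaxMatrix3, Matrix.of_apply, Fin.val_zero]
  split_ifs <;> first | omega | simp_all

theorem mixmaxMatrix3_subColFromOthers_diag (n : ℕ) (s m : ℤ) (i : Fin (n + 1)) :
    (mixmaxMatrix3 (n + 1) s m).subColFromOthers 0 i i = 1 := by
  simp only [Matrix.subColFromOthers, mixmaxMatrix3, Matrix.of_apply, Fin.val_zero]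
  split_ifs <;> first | omega | simp_all

theorem stmt16_general (N : ℕ) (s m : ℤ) : (mixmaxMatrix3 N s m).det = 1 := by
  cases N with
  | zero => exact Matrix.det_isEmpty
  | succ n =>
    rw [← Matrix.det_subColFromOthers _ 0, Matrix.det_of_isLowerTriangular _
      (mixmaxMatrix3_subColFromOthers_isLowerTriangular n s m)]
    exact Finset.prod_eq_one fun i _ => mixmaxMatrix3_subColFromOthers_diag n s m i

theorem stmt16 (N : ℕ) (hN : 2 ≤ N) (s m : ℤ) : (mixmaxMatrix3 N s m).det = 1 :=
  stmt16_general N s m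
end
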